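/- arXiv:1906.04621 — 4 statements merged into one kernel-verified Lean document; each statement's English description precedes it below -/
import Mathlib

section
/- Let ⟨w_t⟩ be a sequence in (0,1) such that ∑ w_t converges. Then there exists a subsequence ⟨y_t⟩ of ⟨w_t⟩ which is strictly decreasing, has distinct finite products (i.e., for nonempty finite sets F ≠ G, ∏_{n∈F} y_n ≠ ∏_{n∈G} y_n), and satisfies FP(⟨y_t⟩) ⊆ FP(⟨w_t⟩). -/
/-!
Since `w t → 0`, it has a subsequence `y` with `y (n + 1) < y n ^ 2`. Then the numbers
`a n = -log y n` satisfy `2 a n < a (n + 1)`, so each exceeds the sum of all previous ones. For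
such a superincreasing sequence the subset sums are strictly monotone in the colexicographic order on finite sets, which
makes the finite products `∏ n ∈ F, y n = exp (-∑ n ∈ F, a n)` pairwise distinct.
-/

/-- Finite products of a sequence over nonempty finite index sets. -/
def FPinf (x : ℕ → ℝ) : Set ℝ :=
  {s | ∃ F : Finset ℕ, F.Nonempty ∧ s = ∏ n ∈ F, x n}

open Finset Finset.Colex

theorem exists_strictMono_rel_succ {r : ℕ → ℕ → Prop} (h : ∀ n, ∃ k > n, r n k) :
    ∃ φ : ℕ → ℕ, StrictMono φ ∧ ∀ n, r (φ n) (φ (n + 1)) := by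
  choose f hf hr using h
  refine ⟨fun n => f^[n] 0, strictMono_nat_of_lt_succ fun n => ?_, fun n => ?_⟩
  · simpa only [Function.iterate_succ_apply'] using hf _
  · simpa only [Function.iterate_succ_apply'] using hr _

section Superincreasing

variable {M : Type*} [AddCommMonoid M] [PartialOrder M] [IsOrderedCancelAddMonoid M] {a : ℕ → M}

theorem sum_range_lt_of_add_self_lt (h₀ : 0 < a 0) (h : ∀ n, a n + a n < a (n + 1)) (n : ℕ) :
    ∑ i ∈ range n, a i < a n := by
  induction n with
  | zero => simpa using h₀
  | succ n ih =>
    calc ∑ i ∈ range (n + 1), a i = ∑ i ∈ range n, a i + a n := sum_range_succ a n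
      _ < a n + a n := by gcongr
      _ < a (n + 1) := h n

theorem sum_ofColex_strictMono_of_sum_range_lt (ha : ∀ i, 0 ≤ a i)
    (h : ∀ n, ∑ i ∈ range n, a i < a n) :
    StrictMono fun s : Colex (Finset ℕ) => ∑ i ∈ ofColex s, a i := by
  intro s t hst
  obtain ⟨m, hmt, hms, hm⟩ := lt_iff_exists_forall_lt.1 hst
  rw [← sum_sdiff_lt_sum_sdiff]
  calc ∑ i ∈ ofColex s \ ofColex t, a i ≤ ∑ i ∈ range m, a i :=
        sum_le_sum_of_subset_of_nonneg
          (fun b hb => mem_range.2 (hm b (mem_sdiff.1 hb).1 (mem_sdiff.1 hb).2))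
          (fun i _ _ => ha i)
    _ < a m := h m
    _ ≤ ∑ i ∈ ofColex t \ ofColex s, a i :=
        single_le_sum (fun i _ => ha i) (mem_sdiff.2 ⟨hmt, hms⟩)

end Superincreasing

theorem prod_injective_of_lt_sq {y : ℕ → ℝ} (hy : ∀ n, y n ∈ Set.Ioo (0 : ℝ) 1)
    (hsq : ∀ n, y (n + 1) < y n ^ 2) :
    Function.Injective fun s : Finset ℕ => ∏ n ∈ s, y n := by
  set a : ℕ → ℝ := fun n => -Real.log (y n)
  have ha : ∀ n, 0 < a n := fun n => neg_pos.2 (Real.log_neg (hy n).1 (hy n).2)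
  have hdouble : ∀ n, a n + a n < a (n + 1) := by
    intro n
    have := Real.log_lt_log (hy (n + 1)).1 (hsq n)
    rw [Real.log_pow] at this
    simp only [a]
    push_cast at this
    linarith
  have hprod : ∀ s : Finset ℕ, ∏ n ∈ s, y n = Real.exp (-∑ n ∈ s, a n) := by
    intro s
    simp only [a, neg_neg, sum_neg_distrib, Real.exp_sum, Real.exp_log (hy _).1]
  have hmono := sum_ofColex_strictMono_of_sum_range_lt (fun n => (ha n).le)
    (sum_range_lt_of_add_self_lt (ha 0) hdouble)
  intro s t hst
  simp only [hprod] at hst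
  exact toColex_inj.1 (hmono.injective (neg_injective (Real.exp_injective hst)))

theorem FPinf_comp_subset {x : ℕ → ℝ} {p : ℕ → ℕ} (hp : Function.Injective p) :
    FPinf (x ∘ p) ⊆ FPinf x := by
  rintro s ⟨F, hF, rfl⟩
  exact ⟨F.image p, hF.image p, (prod_image fun a _ b _ h => hp h).symm⟩

theorem stmt_1 (w : ℕ → ℝ) (hw : ∀ t, w t ∈ Set.Ioo (0:ℝ) 1)
    (hsum : Summable w) :
    ∃ p : ℕ → ℕ, StrictMono p ∧ StrictAnti (w ∘ p) ∧
      (∀ F G : Finset ℕ, F.Nonempty → G.Nonempty → F ≠ G →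
        ∏ n ∈ F, (w ∘ p) n ≠ ∏ n ∈ G, (w ∘ p) n) ∧
      FPinf (w ∘ p) ⊆ FPinf w := by
  have hsmall : ∀ n, ∃ k > n, w k < w n ^ 2 := fun n =>
    ((Filter.eventually_gt_atTop n).and (hsum.tendsto_atTop_zero.eventually
      (gt_mem_nhds (pow_pos (hw n).1 2)))).exists
  obtain ⟨p, hp, hpsq⟩ := exists_strictMono_rel_succ hsmall
  have hanti : StrictAnti (w ∘ p) := strictAnti_nat_of_succ_lt fun n =>
    (hpsq n).trans (pow_lt_self_of_lt_one₀ (hw _).1 (hw _).2 one_lt_two)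
  refine ⟨p, hp, hanti, fun F G _ _ hFG => ?_, FPinf_comp_subset hp.injective⟩
  exact (prod_injective_of_lt_sq (fun n => hw (p n)) hpsq).ne hFG
end

section
/- Let S be a dense subsemigroup of ((0,∞),+) such that S ∩ (0,1) is a subsemigroup of ((0,1),·) and for each y ∈ S ∩ (0,1) and x ∈ S, both x/y ∈ S and y·x ∈ S. Then 0⁺(S) = { p ∈ βS_d : (0,ε) ∩ S ∈ p for all ε > 0 } is a two-sided ideal of (β(S ∩ (0,1)), ·), i.e., for p ∈ 0⁺(S) restricted to ultrafilters on S ∩ (0,1) and q any ultrafilter on S ∩ (0,1), both p·q and q·p contain (0,ε) ∩ S for every ε > 0. -/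
/-!
If `0 < y < 1` then `x * y < x`, and symmetrically. So multiplying, on either side, an element
of `(0, ε) ∩ S` by an element of `S ∩ (0, 1)` lands again in `(0, ε) ∩ S`, because `S ∩ (0, 1)`
is closed under multiplication; the membership of `p·q` and `q·p` then follows by monotonicity.
-/

open Set Filter

theorem Filter.setOf_and_setOf_and_mem {α β : Type*} {p : Filter α} {q : Filter β}
    {A₀ A : Set α} {B₀ B : Set β} {R : α → β → Prop}
    (hA₀ : A₀ ∈ p) (hA : A₀ ⊆ A) (hB₀ : B₀ ∈ q) (hB : B₀ ⊆ B)
    (hR : ∀ x ∈ A₀, ∀ y ∈ B₀, R x y) :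
    {x | x ∈ A ∧ {y | y ∈ B ∧ R x y} ∈ q} ∈ p :=
  mem_of_superset hA₀ fun x hx =>
    ⟨hA hx, mem_of_superset hB₀ fun y hy => ⟨hB hy, hR x hx y hy⟩⟩

section OrderedSemiring

variable {α : Type*} [Semiring α] [PartialOrder α] [IsStrictOrderedRing α] {x y ε : α}

theorem mul_mem_Ioo_zero_of_left (hx : x ∈ Ioo 0 ε) (hy : y ∈ Ioo 0 1) : x * y ∈ Ioo 0 ε :=
  ⟨mul_pos hx.1 hy.1, (mul_lt_of_lt_one_right hx.1 hy.2).trans hx.2⟩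

theorem mul_mem_Ioo_zero_of_right (hx : x ∈ Ioo 0 1) (hy : y ∈ Ioo 0 ε) : x * y ∈ Ioo 0 ε :=
  ⟨mul_pos hx.1 hy.1, (mul_lt_of_lt_one_left hy.1 hx.2).trans hy.2⟩

end OrderedSemiring

theorem stmt_3_general (S : Set ℝ)
    (hmul : ∀ x ∈ S ∩ Set.Ioo (0:ℝ) 1, ∀ y ∈ S ∩ Set.Ioo (0:ℝ) 1,
      x * y ∈ S ∩ Set.Ioo (0:ℝ) 1)
    (p q : Ultrafilter ℝ)
    (hqT : S ∩ Set.Ioo (0:ℝ) 1 ∈ q)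
    (hp0 : ∀ ε : ℝ, 0 < ε → S ∩ Set.Ioo 0 ε ∈ p) :
    ∀ ε : ℝ, 0 < ε →
      -- (0, ε) ∩ S belongs to p·q :
      ({x | x ∈ S ∩ Set.Ioo (0:ℝ) 1 ∧
        {y | y ∈ S ∩ Set.Ioo (0:ℝ) 1 ∧ x * y ∈ S ∩ Set.Ioo 0 ε} ∈ q} ∈ p) ∧
      -- (0, ε) ∩ S belongs to q·p :
      ({x | x ∈ S ∩ Set.Ioo (0:ℝ) 1 ∧
        {y | y ∈ S ∩ Set.Ioo (0:ℝ) 1 ∧ x * y ∈ S ∩ Set.Ioo 0 ε} ∈ p} ∈ q) := by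
  intro ε hε
  have hsmall : S ∩ Ioo 0 1 ∩ (S ∩ Ioo 0 ε) ∈ p := inter_mem (hp0 1 one_pos) (hp0 ε hε)
  refine ⟨setOf_and_setOf_and_mem hsmall inter_subset_left hqT subset_rfl ?_,
    setOf_and_setOf_and_mem hqT subset_rfl hsmall inter_subset_left ?_⟩
  · exact fun x hx y hy => ⟨(hmul x hx.1 y hy).1, mul_mem_Ioo_zero_of_left hx.2.2 hy.2⟩
  · exact fun x hx y hy => ⟨(hmul x hx y hy.1).1, mul_mem_Ioo_zero_of_right hx.2 hy.2.2⟩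

theorem stmt_3 (S : Set ℝ)
    (hpos : S ⊆ Set.Ioi (0:ℝ))
    (hdense : ∀ a b : ℝ, 0 < a → a < b → ∃ s ∈ S, a < s ∧ s < b)
    (hadd : ∀ x ∈ S, ∀ y ∈ S, x + y ∈ S)
    (hmul : ∀ x ∈ S ∩ Set.Ioo (0:ℝ) 1, ∀ y ∈ S ∩ Set.Ioo (0:ℝ) 1,
      x * y ∈ S ∩ Set.Ioo (0:ℝ) 1)
    (hdivmul : ∀ y ∈ S ∩ Set.Ioo (0:ℝ) 1, ∀ x ∈ S, x / y ∈ S ∧ y * x ∈ S)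
    (p q : Ultrafilter ℝ)
    (hpT : S ∩ Set.Ioo (0:ℝ) 1 ∈ p) (hqT : S ∩ Set.Ioo (0:ℝ) 1 ∈ q)
    (hp0 : ∀ ε : ℝ, 0 < ε → S ∩ Set.Ioo 0 ε ∈ p) :
    ∀ ε : ℝ, 0 < ε →
      -- (0, ε) ∩ S belongs to p·q :
      ({x | x ∈ S ∩ Set.Ioo (0:ℝ) 1 ∧
        {y | y ∈ S ∩ Set.Ioo (0:ℝ) 1 ∧ x * y ∈ S ∩ Set.Ioo 0 ε} ∈ q} ∈ p) ∧
      -- (0, ε) ∩ S belongs to q·p :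
      ({x | x ∈ S ∩ Set.Ioo (0:ℝ) 1 ∧
        {y | y ∈ S ∩ Set.Ioo (0:ℝ) 1 ∧ x * y ∈ S ∩ Set.Ioo 0 ε} ∈ p} ∈ q) :=
  stmt_3_general S hmul p q hqT hp0
end

section
/- Let S be a dense subsemigroup of ((0,∞),+) with S ∩ (0,1) a multiplicative subsemigroup, and suppose A ⊆ S ∩ (0,1) is such that both: (i) A is a member of an ultrafilter p on S ∩ (0,1), and (ii) for every B ∈ p and every ε > 0, B contains FS(⟨x_n⟩) ∩ (0,ε) for some sequence ⟨x_n⟩ with convergent sum, i.e., there exists a strictly decreasing sequence ⟨x_n⟩ with FS(⟨x_n⟩) ⊆ B ∩ (0,ε). Fix m ∈ ℕ and ε > 0, and let B_0 = { z ∈ A ∩ (0,ε) : ∃ strictly decreasing x_1 > ... > x_m with FS(⟨x_n⟩_{n=1}^m) ⊆ A ∩ (0,ε) and z = x_1 + ... + x_m }. Then B_0 ∈ p. -/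
/-! Intersect an arbitrary `B ∈ p` with `A` and apply (ii) to `B ∩ A`: the sum of the first `m`
terms of the resulting sequence lies in `B`, and the sequence itself witnesses that this sum lies
in `B₀`. So `B₀` meets every member of `p`, hence belongs to the ultrafilter `p`. -/

def FSinf (x : ℕ → ℝ) : Set ℝ :=
  {s | ∃ F : Finset ℕ, F.Nonempty ∧ s = ∑ n ∈ F, x n}

def FSfin (m : ℕ) (x : ℕ → ℝ) : Set ℝ :=
  {s | ∃ F : Finset ℕ, F.Nonempty ∧ F ⊆ Finset.range m ∧ s = ∑ n ∈ F, x n}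

theorem FSfin_subset_FSinf (m : ℕ) (x : ℕ → ℝ) : FSfin m x ⊆ FSinf x :=
  fun _ ⟨F, hF, _, hs⟩ => ⟨F, hF, hs⟩

theorem sum_range_mem_FSinf {m : ℕ} (hm : 0 < m) (x : ℕ → ℝ) :
    ∑ n ∈ Finset.range m, x n ∈ FSinf x :=
  ⟨Finset.range m, Finset.nonempty_range_iff.2 hm.ne', rfl⟩

theorem stmt_9_general
    (A : Set ℝ)
    (p : Ultrafilter ℝ) (hAp : A ∈ p)
    (hp : ∀ B ∈ p, ∀ ε : ℝ, 0 < ε → ∃ x : ℕ → ℝ, StrictAnti x ∧ Summable x ∧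
      FSinf x ⊆ B ∩ Set.Ioo 0 ε)
    (m : ℕ) (hm : 0 < m) (ε : ℝ) (hε : 0 < ε) :
    {z | z ∈ A ∩ Set.Ioo 0 ε ∧ ∃ x : ℕ → ℝ,
      (∀ i j, i < j → j < m → x j < x i) ∧
      FSfin m x ⊆ A ∩ Set.Ioo 0 ε ∧
      z = ∑ n ∈ Finset.range m, x n} ∈ p := by
  refine Ultrafilter.frequently_iff_eventually.1 (Filter.frequently_iff.2 fun {B} hB => ?_)
  obtain ⟨x, hanti, -, hFS⟩ := hp _ (Filter.inter_mem hB hAp) ε hε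
  have hFS_A : FSinf x ⊆ A ∩ Set.Ioo 0 ε := fun s hs => ⟨(hFS hs).1.2, (hFS hs).2⟩
  have hsum := sum_range_mem_FSinf hm x
  exact ⟨_, (hFS hsum).1.1, hFS_A hsum, x, fun _ _ hij _ => hanti hij,
    (FSfin_subset_FSinf m x).trans hFS_A, rfl⟩

theorem stmt_9 (S : Set ℝ)
    (hpos : S ⊆ Set.Ioi (0:ℝ))
    (hdense : ∀ a b : ℝ, 0 < a → a < b → ∃ s ∈ S, a < s ∧ s < b)
    (hadd : ∀ x ∈ S, ∀ y ∈ S, x + y ∈ S)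
    (hmul : ∀ x ∈ S ∩ Set.Ioo (0:ℝ) 1, ∀ y ∈ S ∩ Set.Ioo (0:ℝ) 1,
      x * y ∈ S ∩ Set.Ioo (0:ℝ) 1)
    (A : Set ℝ) (hAsub : A ⊆ S ∩ Set.Ioo (0:ℝ) 1)
    (p : Ultrafilter ℝ) (hAp : A ∈ p)
    (hp : ∀ B ∈ p, ∀ ε : ℝ, 0 < ε → ∃ x : ℕ → ℝ, StrictAnti x ∧ Summable x ∧
      FSinf x ⊆ B ∩ Set.Ioo 0 ε)
    (m : ℕ) (hm : 0 < m) (ε : ℝ) (hε : 0 < ε) :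
    {z | z ∈ A ∩ Set.Ioo 0 ε ∧ ∃ x : ℕ → ℝ,
      (∀ i j, i < j → j < m → x j < x i) ∧
      FSfin m x ⊆ A ∩ Set.Ioo 0 ε ∧
      z = ∑ n ∈ Finset.range m, x n} ∈ p :=
  stmt_9_general A p hAp hp m hm ε hε
end

section
/- Let ⟨y_n⟩ be a strictly decreasing sequence in (0,1) such that for each n, y_{n+1} < min(E_n ∪ { u/v : u, v ∈ E_n, u < v }) where E_n = FP(⟨y_k⟩_{k=1}^n). Then ⟨y_n⟩ has distinct finite products: for nonempty finite F ≠ G ⊆ ℕ, ∏_{k∈F} y_k ≠ ∏_{k∈G} y_k. -/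
/-!
By induction on `n`, `F ↦ ∏ k ∈ F, y k` is injective on subsets of `{0, …, n - 1}`, the empty
set included. Split off the top index `n`: if it lies in both sets or in neither, cancel `y n` and
use the induction hypothesis. Otherwise `y n * P = q` with `P`, `q` products over `{0, …, n - 1}`,
and this is impossible: `q = 1` contradicts `y n * P < 1`, `P = 1` contradicts `y n < q`, and
otherwise `q < P` but `q / P = y n` contradicts `y n < q / P`.
-/

/-- Finite products of the first `m` terms over nonempty index sets. -/
def FPfin (m : ℕ) (y : ℕ → ℝ) : Set ℝ :=
  {s | ∃ F : Finset ℕ, F.Nonempty ∧ F ⊆ Finset.range m ∧ s = ∏ n ∈ F, y n}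

open Finset

/-- The paper's `y m < min (E ∪ {u / v : u, v ∈ E, u < v})` with `E = FPfin m y`. -/
def LtMinFPfin (y : ℕ → ℝ) (m : ℕ) : Prop :=
  (∀ u ∈ FPfin m y, y m < u) ∧ ∀ u ∈ FPfin m y, ∀ v ∈ FPfin m y, u < v → y m < u / v

lemma FPfin_zero (y : ℕ → ℝ) : FPfin 0 y = ∅ := by
  ext s
  simp [FPfin, Finset.subset_empty, Finset.nonempty_iff_ne_empty]

lemma ltMinFPfin_zero (y : ℕ → ℝ) : LtMinFPfin y 0 := by
  simp [LtMinFPfin, FPfin_zero]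

section
variable {y : ℕ → ℝ} (hy : ∀ n, y n ∈ Set.Ioo (0 : ℝ) 1)
include hy

lemma prod_pos_of_mem_Ioo (F : Finset ℕ) : 0 < ∏ k ∈ F, y k :=
  prod_pos fun k _ => (hy k).1

lemma mul_prod_lt_one_of_mem_Ioo (m : ℕ) (F : Finset ℕ) : y m * ∏ k ∈ F, y k < 1 :=
  calc y m * ∏ k ∈ F, y k ≤ y m * 1 :=
        mul_le_mul_of_nonneg_left (prod_le_one (fun k _ => (hy k).1.le) fun k _ => (hy k).2.le)
          (hy m).1.le
    _ < 1 := by simpa using (hy m).2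

lemma mul_prod_ne_prod {m : ℕ} (hm : LtMinFPfin y m) {F G : Finset ℕ} (hF : F ⊆ range m)
    (hG : G ⊆ range m) : y m * ∏ k ∈ F, y k ≠ ∏ k ∈ G, y k := by
  intro heq
  obtain rfl | hGne := G.eq_empty_or_nonempty
  · exact (mul_prod_lt_one_of_mem_Ioo hy m F).ne (by simpa using heq)
  have hq : ∏ k ∈ G, y k ∈ FPfin m y := ⟨G, hGne, hG, rfl⟩
  obtain rfl | hFne := F.eq_empty_or_nonempty
  · exact (hm.1 _ hq).ne (by simpa using heq)
  have hp : ∏ k ∈ F, y k ∈ FPfin m y := ⟨F, hFne, hF, rfl⟩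
  have hPpos := prod_pos_of_mem_Ioo hy F
  have hqP : ∏ k ∈ G, y k < ∏ k ∈ F, y k := heq ▸ mul_lt_of_lt_one_left hPpos (hy m).2
  have := hm.2 _ hq _ hp hqP
  rw [← heq, mul_div_cancel_right₀ _ hPpos.ne'] at this
  exact this.false

lemma prod_injOn_range (hsep : ∀ m, LtMinFPfin y m) (n : ℕ) {F G : Finset ℕ}
    (hF : F ⊆ range n) (hG : G ⊆ range n) (heq : ∏ k ∈ F, y k = ∏ k ∈ G, y k) : F = G := by
  induction n generalizing F G with
  | zero => rw [subset_empty.mp hF, subset_empty.mp hG]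
  | succ n ih =>
    rw [range_add_one, subset_insert_iff] at hF hG
    by_cases hnF : n ∈ F <;> by_cases hnG : n ∈ G
    · rw [← prod_erase_mul F y hnF, ← prod_erase_mul G y hnG] at heq
      have := ih hF hG (mul_right_cancel₀ (hy n).1.ne' heq)
      rw [← insert_erase hnF, ← insert_erase hnG, this]
    · rw [← mul_prod_erase F y hnF] at heq
      rw [erase_eq_of_notMem hnG] at hG
      exact absurd heq (mul_prod_ne_prod hy (hsep n) hF hG)
    · rw [← mul_prod_erase G y hnG] at heq
      rw [erase_eq_of_notMem hnF] at hF
      exact absurd heq.symm (mul_prod_ne_prod hy (hsep n) hG hF)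
    · rw [erase_eq_of_notMem hnF] at hF
      rw [erase_eq_of_notMem hnG] at hG
      exact ih hF hG heq

end

theorem stmt_13_general (y : ℕ → ℝ) (hy : ∀ n, y n ∈ Set.Ioo (0:ℝ) 1)
    (hcond : ∀ n : ℕ,
      (∀ u ∈ FPfin (n + 1) y, y (n + 1) < u) ∧
      (∀ u ∈ FPfin (n + 1) y, ∀ v ∈ FPfin (n + 1) y, u < v → y (n + 1) < u / v)) :
    ∀ F G : Finset ℕ, F.Nonempty → G.Nonempty → F ≠ G →
      ∏ k ∈ F, y k ≠ ∏ k ∈ G, y k := by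
  have hsep : ∀ m, LtMinFPfin y m
    | 0 => ltMinFPfin_zero y
    | n + 1 => hcond n
  intro F G _ _ hne heq
  obtain ⟨n, hn⟩ := exists_nat_subset_range (F ∪ G)
  exact hne (prod_injOn_range hy hsep n (union_subset_left hn) (union_subset_right hn) heq)

theorem stmt_13 (y : ℕ → ℝ) (hy : ∀ n, y n ∈ Set.Ioo (0:ℝ) 1)
    (hanti : StrictAnti y)
    (hcond : ∀ n : ℕ,
      (∀ u ∈ FPfin (n + 1) y, y (n + 1) < u) ∧
      (∀ u ∈ FPfin (n + 1) y, ∀ v ∈ FPfin (n + 1) y, u < v → y (n + 1) < u / v)) :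
    ∀ F G : Finset ℕ, F.Nonempty → G.Nonempty → F ≠ G →
      ∏ k ∈ F, y k ≠ ∏ k ∈ G, y k :=
  stmt_13_general y hy hcond
end
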